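/- Let Δ ⊂ {x ∈ ℝ₊ⁿ : x₁ ≥ x₂ + ⋯ + x_n} be a convex body with nonempty interior such that inf_Δ x₁ = 0 (hence 0 ∈ Δ), and let G_c(x) = min{x₁ − c, 0} on Δ for a parameter c > 0. Then for all sufficiently small c > 0, the infimum over affine functions ℓ of sup_Δ(G_c + ℓ) − (1/vol Δ)∫_Δ(G_c + ℓ)dx, taken over ℓ in the linear span of the functions ℓ(ρ)(x) = −⟨ρ,ν₁*⟩x₁ + Σ_{i=2}^n ⟨ρ,ν₁*−ν_i*⟩x_i + const (ρ ∈ ℝ^m), is attained at ℓ = 0. -/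

import Mathlib

open MeasureTheory

lemma stmt18_aux {n : ℕ} [NeZero n] (Δ : Set (Fin n → ℝ))
    (hcomp : IsCompact Δ) (β : Fin n → ℝ) (hβ : β ∈ Δ)
    (c : ℝ) (hβc : c ≤ β 0)
    (hV : 0 < (volume Δ).toReal)
    (ℓ : (Fin n → ℝ) → ℝ) (hℓ : Continuous ℓ)
    (hℓavg : (∫ x in Δ, ℓ x) = ℓ β * (volume Δ).toReal) :
    sSup ((fun x => min (x 0 - c) 0) '' Δ)
        - (∫ x in Δ, min (x 0 - c) 0) / (volume Δ).toReal
      ≤ sSup ((fun x => min (x 0 - c) 0 + ℓ x) '' Δ)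
        - (∫ x in Δ, (min (x 0 - c) 0 + ℓ x)) / (volume Δ).toReal := by
  have hG : Continuous fun x : Fin n → ℝ => min (x 0 - c) 0 :=
    ((continuous_apply 0).sub continuous_const).min continuous_const
  have hGint : IntegrableOn (fun x : Fin n → ℝ => min (x 0 - c) 0) Δ volume :=
    hG.continuousOn.integrableOn_compact hcomp
  have hℓint : IntegrableOn ℓ Δ volume := hℓ.continuousOn.integrableOn_compact hcomp
  have hGβ : min (β 0 - c) 0 = 0 := min_eq_right (by linarith)
  -- LHS sup is 0
  have hLsup : sSup ((fun x => min (x 0 - c) 0) '' Δ) = 0 := by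
    apply le_antisymm
    · exact Real.sSup_le (by rintro y ⟨x, hx, rfl⟩; exact min_le_right _ _) le_rfl
    · refine le_csSup ⟨0, ?_⟩ ⟨β, hβ, hGβ⟩
      rintro y ⟨x, hx, rfl⟩; exact min_le_right _ _
  -- RHS sup is at least ℓ β
  have hRsup : ℓ β ≤ sSup ((fun x => min (x 0 - c) 0 + ℓ x) '' Δ) := by
    have hb : BddAbove ((fun x => min (x 0 - c) 0 + ℓ x) '' Δ) :=
      (hcomp.image (hG.add hℓ)).bddAbove
    have hmem : min (β 0 - c) 0 + ℓ β ∈ (fun x => min (x 0 - c) 0 + ℓ x) '' Δ :=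
      Set.mem_image_of_mem _ hβ
    have := le_csSup hb hmem
    rwa [hGβ, zero_add] at this
  have hIsum : (∫ x in Δ, (min (x 0 - c) 0 + ℓ x))
      = (∫ x in Δ, min (x 0 - c) 0) + ∫ x in Δ, ℓ x := integral_add hGint hℓint
  rw [hLsup, hIsum, hℓavg]
  have hdiv : ((∫ x in Δ, min (x 0 - c) 0) + ℓ β * (volume Δ).toReal) / (volume Δ).toReal
      = (∫ x in Δ, min (x 0 - c) 0) / (volume Δ).toReal + ℓ β := by
    field_simp
  rw [hdiv]
  linarith


/-- Let `Δ ⊂ {x ∈ ℝ₊ⁿ : x₁ ≥ x₂ + ⋯ + x_n}` be a convex body with nonempty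
interior such that `inf_Δ x₁ = 0`, and `G_c(x) = min{x₁ − c, 0}` on `Δ`.  Then for all
sufficiently small `c > 0`, the infimum over affine functions
`ℓ(ρ)(x) = −⟨ρ,ν₁*⟩x₁ + Σ_{i=2}^n ⟨ρ,ν₁*−ν_i*⟩x_i + const` (`ρ ∈ ℝ^m`) of
`J(ℓ) = sup_Δ(G_c+ℓ) − (1/vol Δ)∫_Δ(G_c+ℓ)` is attained at `ℓ = 0`, i.e.
`J(0) ≤ J(ℓ(ρ))` for every `ρ` and every constant.  (Index `0 : Fin n` plays the role
of the coordinate `x₁`.) -/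
theorem stmt18
    (n m : ℕ) [NeZero n]
    (Δ : Set (Fin n → ℝ))
    (hconv : Convex ℝ Δ) (hcomp : IsCompact Δ) (hmeas : MeasurableSet Δ)
    (hint : (interior Δ).Nonempty)
    (hΔsub : Δ ⊆ {x | (∀ i, 0 ≤ x i) ∧
      (∑ i ∈ Finset.univ.erase (0 : Fin n), x i) ≤ x 0})
    (hinf : IsGLB ((fun x => x 0) '' Δ) 0)
    (νstar : Fin n → Fin m → ℝ) :       -- the weights ν₁*, …, ν_n*
    ∃ ε > 0, ∀ c : ℝ, c ∈ Set.Ioo 0 ε → ∀ (ρ : Fin m → ℝ) (b : ℝ),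
      sSup ((fun x => min (x 0 - c) 0) '' Δ)
          - (∫ x in Δ, min (x 0 - c) 0) / (volume Δ).toReal
      ≤ sSup ((fun x => min (x 0 - c) 0
            + (-(∑ j, ρ j * νstar 0 j) * x 0
              + (∑ i ∈ Finset.univ.erase (0 : Fin n),
                  (∑ j, ρ j * (νstar 0 j - νstar i j)) * x i) + b)) '' Δ)
          - (∫ x in Δ, (min (x 0 - c) 0
            + (-(∑ j, ρ j * νstar 0 j) * x 0
              + (∑ i ∈ Finset.univ.erase (0 : Fin n),
                  (∑ j, ρ j * (νstar 0 j - νstar i j)) * x i) + b))) / (volume Δ).toReal := by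
  classical
  obtain ⟨z, hz⟩ := hint
  obtain ⟨δ, hδpos, hball⟩ := Metric.mem_nhds_iff.mp (mem_interior_iff_mem_nhds.mp hz)
  -- z 0 is bounded below by δ/2
  have hz0 : δ / 2 ≤ z 0 := by
    have hz' : Function.update z 0 (z 0 - δ / 2) ∈ Δ := by
      apply hball
      rw [Metric.mem_ball]
      have : dist (Function.update z 0 (z 0 - δ / 2)) z ≤ δ / 2 := by
        rw [dist_pi_le_iff (by linarith)]
        intro i
        by_cases hi : i = 0
        · subst hi; rw [Function.update_self, Real.dist_eq]
          rw [abs_le]; constructor <;> linarith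
        · rw [Function.update_of_ne hi]; simp [dist_self]; linarith
      linarith
    have h0 := (hΔsub hz').1 0
    rw [Function.update_self] at h0
    linarith
  have hzpos : 0 < z 0 := by linarith
  -- a small ball inside Δ on which x 0 ≥ z 0 / 2
  set r : ℝ := min (δ / 2) (z 0 / 2) with hr
  have hrpos : 0 < r := by positivity
  have hballsub : Metric.ball z r ⊆ Δ := fun x hx => hball (by
    exact Metric.ball_subset_ball (by rw [hr]; exact (min_le_left _ _).trans (by linarith)) hx)
  have hlow : ∀ x ∈ Metric.ball z r, z 0 / 2 ≤ x 0 := by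
    intro x hx
    have h1 : dist (x 0) (z 0) ≤ dist x z := dist_le_pi_dist x z 0
    rw [Metric.mem_ball] at hx
    have h2 : dist (x 0) (z 0) < r := lt_of_le_of_lt h1 hx
    rw [Real.dist_eq, abs_lt] at h2
    have : r ≤ z 0 / 2 := min_le_right _ _
    linarith
  -- volume facts
  have hV0 : volume Δ ≠ 0 := by
    refine (lt_of_lt_of_le (Metric.measure_ball_pos volume z hrpos) (measure_mono hballsub)).ne'
  have hVfin : volume Δ ≠ ⊤ := hcomp.measure_lt_top.ne
  have hVpos : 0 < (volume Δ).toReal := ENNReal.toReal_pos hV0 hVfin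
  -- the barycenter
  set β : Fin n → ℝ := ⨍ x in Δ, x with hβdef
  have hidint : IntegrableOn (fun x : Fin n → ℝ => x) Δ volume :=
    continuous_id.continuousOn.integrableOn_compact hcomp
  have hβΔ : β ∈ Δ :=
    hconv.set_average_mem hcomp.isClosed hV0 hVfin (ae_restrict_mem hmeas) hidint
  have hβi : ∀ i, ∫ x in Δ, x i = β i * (volume Δ).toReal := by
    intro i
    have h1 : β = (volume Δ).toReal⁻¹ • (∫ x in Δ, (x : Fin n → ℝ)) := by
      rw [hβdef, setAverage_eq]; rfl
    have h2 : (∫ x in Δ, (x : Fin n → ℝ)) i = ∫ x in Δ, x i :=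
      ((ContinuousLinearMap.proj (R := ℝ) (φ := fun _ : Fin n => ℝ) i).integral_comp_comm
        hidint).symm
    have h3 : β i = (volume Δ).toReal⁻¹ * (∫ x in Δ, x i) := by
      rw [h1, Pi.smul_apply, smul_eq_mul, h2]
    rw [h3]
    field_simp
  -- positivity of β 0
  have hintpos : 0 < ∫ x in Δ, x 0 := by
    have hx0int : IntegrableOn (fun x : Fin n → ℝ => x 0) Δ volume :=
      (continuous_apply 0).continuousOn.integrableOn_compact hcomp
    have h1 : z 0 / 2 * (volume (Metric.ball z r)).toReal ≤ ∫ x in Metric.ball z r, x 0 :=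
      by have := setIntegral_ge_of_const_le_real measurableSet_ball measure_ball_lt_top.ne hlow
           (hx0int.mono_set hballsub)
         simp only [smul_eq_mul, Measure.real] at this; linarith
    have h2 : ∫ x in Metric.ball z r, x 0 ≤ ∫ x in Δ, x 0 := by
      refine setIntegral_mono_set hx0int ?_ (HasSubset.Subset.eventuallyLE hballsub)
      exact (ae_restrict_mem hmeas).mono fun x hx => (hΔsub hx).1 0
    have h3 : 0 < (volume (Metric.ball z r)).toReal :=
      ENNReal.toReal_pos (Metric.measure_ball_pos volume z hrpos).ne' measure_ball_lt_top.ne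
    nlinarith
  have hβ0 : 0 < β 0 := by
    have := hβi 0
    nlinarith
  refine ⟨β 0, hβ0, ?_⟩
  intro c hc ρ b
  have hcont : Continuous (fun x : Fin n → ℝ =>
      -(∑ j, ρ j * νstar 0 j) * x 0
        + (∑ i ∈ Finset.univ.erase (0 : Fin n),
            (∑ j, ρ j * (νstar 0 j - νstar i j)) * x i) + b) := by
    refine Continuous.add (Continuous.add ?_ ?_) continuous_const
    · exact continuous_const.mul (continuous_apply 0)
    · exact continuous_finset_sum _ fun i _ => continuous_const.mul (continuous_apply i)
  have hxi : ∀ i : Fin n, IntegrableOn (fun x : Fin n → ℝ => x i) Δ volume := fun i =>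
    (continuous_apply i).continuousOn.integrableOn_compact hcomp
  have h1 : IntegrableOn (fun x : Fin n → ℝ => -(∑ j, ρ j * νstar 0 j) * x 0) Δ volume :=
    (hxi 0).const_mul _
  have h2 : IntegrableOn (fun x : Fin n → ℝ => ∑ i ∈ Finset.univ.erase (0 : Fin n),
      (∑ j, ρ j * (νstar 0 j - νstar i j)) * x i) Δ volume :=
    integrable_finset_sum _ fun i _ => (hxi i).const_mul _
  have havg : (∫ x in Δ, (-(∑ j, ρ j * νstar 0 j) * x 0
        + (∑ i ∈ Finset.univ.erase (0 : Fin n),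
            (∑ j, ρ j * (νstar 0 j - νstar i j)) * x i) + b))
      = (-(∑ j, ρ j * νstar 0 j) * β 0
        + (∑ i ∈ Finset.univ.erase (0 : Fin n),
            (∑ j, ρ j * (νstar 0 j - νstar i j)) * β i) + b) * (volume Δ).toReal := by
    have h12 : IntegrableOn (fun x : Fin n → ℝ => -(∑ j, ρ j * νstar 0 j) * x 0
        + (∑ i ∈ Finset.univ.erase (0 : Fin n),
            (∑ j, ρ j * (νstar 0 j - νstar i j)) * x i)) Δ volume := h1.add h2
    rw [integral_add h12 (integrableOn_const hcomp.measure_lt_top.ne),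
      integral_add h1 h2, integral_const_mul,
      integral_finset_sum _ (fun i _ => (hxi i).const_mul _)]
    simp only [integral_const_mul]
    rw [setIntegral_const]
    simp only [hβi, smul_eq_mul, Measure.real]
    have hsum : ∑ i ∈ Finset.univ.erase (0 : Fin n),
        (∑ j, ρ j * (νstar 0 j - νstar i j)) * (β i * (volume Δ).toReal)
        = (∑ i ∈ Finset.univ.erase (0 : Fin n),
            (∑ j, ρ j * (νstar 0 j - νstar i j)) * β i) * (volume Δ).toReal := by
      rw [Finset.sum_mul]
      exact Finset.sum_congr rfl fun i _ => by ring
    rw [hsum]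
    ring
  exact stmt18_aux Δ hcomp β hβΔ c hc.2.le hVpos _ hcont havg
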